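/- For every positive integer n there exists a nontrivial word v_n ∈ F_2 of word length at most 4n²(n+1) such that v_n is a law in every finite group Γ with |Γ| ≤ n²/9. -/

import Mathlib

/-!
Put `k = ⌊n / 3⌋`. For `g, h` in a group of order `< (k + 1)²` two of the products `g ^ i * h ^ j`
with `0 ≤ i, j ≤ k` coincide, so one of the `2k` commutators `⁅g ^ a, h⁆`, `⁅g, h ^ a⁆`
(`1 ≤ a ≤ k`) is trivial. Placing these words at the leaves of a balanced binary tree of nested
commutators of depth `d`, with `2k ≤ 2 ^ d < 4k`, gives a word of length `< 4 ^ d (2k + 5)` that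
vanishes as soon as one leaf does. Conjugating each node by `x` (left children) or `y` (right
children) makes its reduced word begin with `x_t` and end with `x_t⁻¹`, so nothing cancels when the
commutators are multiplied out and the word is nontrivial.
-/

open scoped commutatorElement

namespace FreeGroup

variable {α : Type*} [DecidableEq α]

def HasEndLetters (p q : α × Bool) (u : FreeGroup α) : Prop :=
  u.toWord.head? = some p ∧ u.toWord.getLast? = some q

namespace HasEndLetters

variable {p q p' q' : α × Bool} {u v : FreeGroup α}

theorem ne_one (h : HasEndLetters p q u) : u ≠ 1 := by
  rintro rfl
  simp [HasEndLetters] at h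

theorem of_pow (a : α) {n : ℕ} (hn : n ≠ 0) : HasEndLetters (a, true) (a, true) (of a ^ n) := by
  simp [HasEndLetters, toWord_of_pow, List.head?_replicate, List.getLast?_replicate, hn]

theorem of (a : α) : HasEndLetters (a, true) (a, true) (of a) := by
  simpa using of_pow a one_ne_zero

theorem inv (h : HasEndLetters p q u) : HasEndLetters (q.1, !q.2) (p.1, !p.2) u⁻¹ := by
  simp [HasEndLetters, toWord_inv, invRev, List.head?_reverse, List.getLast?_reverse, h.1, h.2]

theorem mul (hu : HasEndLetters p q u) (hv : HasEndLetters p' q' v)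
    (hqp : q.1 = p'.1 → q.2 = p'.2) : HasEndLetters p q' (u * v) := by
  have hred : IsReduced (u.toWord ++ v.toWord) :=
    List.isChain_append.mpr ⟨isReduced_toWord, isReduced_toWord, by simpa [hu.2, hv.1]⟩
  simp [HasEndLetters, toWord_mul, hred.reduce_eq, List.head?_append, List.getLast?_append,
    hu.1, hv.2]

theorem commutatorElement {a b : α} {s s' r r' : Bool} (hu : HasEndLetters (a, s) (a, s') u)
    (hv : HasEndLetters (b, r) (b, r') v) (hab : a ≠ b) : HasEndLetters (a, s) (b, !r) ⁅u, v⁆ := by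
  rw [commutatorElement_def]
  exact ((hu.mul hv (absurd · hab)).mul hu.inv (absurd · hab.symm)).mul hv.inv (absurd · hab)

theorem conj {b c : α} (hu : HasEndLetters (b, true) (c, false) u) (a : α) :
    HasEndLetters (a, true) (a, false) (FreeGroup.of a * u * (FreeGroup.of a)⁻¹) :=
  ((HasEndLetters.of a).mul hu fun _ => rfl).mul (HasEndLetters.of a).inv fun _ => rfl

end HasEndLetters

theorem norm_commutatorElement_le (u v : FreeGroup α) : norm ⁅u, v⁆ ≤ 2 * norm u + 2 * norm v := by
  rw [commutatorElement_def]
  have := norm_mul_le u v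
  have := norm_mul_le (u * v) u⁻¹
  have := norm_mul_le (u * v * u⁻¹) v⁻¹
  simp only [norm_inv_eq] at *
  omega

theorem norm_conj_le (a : α) (u : FreeGroup α) : norm (of a * u * (of a)⁻¹) ≤ norm u + 2 := by
  have := norm_mul_le (of a) u
  have := norm_mul_le (of a * u) (of a)⁻¹
  simp only [norm_inv_eq, norm_of] at *
  omega

end FreeGroup

section CommTree

variable {G H : Type*} [Group G] [Group H]

def commTree (c : Fin 2 → G) (w : ℕ → G) : ℕ → Fin 2 → ℕ → G
  | 0, t, j => c t * w j * (c t)⁻¹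
  | d + 1, t, j => c t * ⁅commTree c w d 0 (2 * j), commTree c w d 1 (2 * j + 1)⁆ * (c t)⁻¹

theorem map_commTree (φ : G →* H) (c : Fin 2 → G) (w : ℕ → G) :
    ∀ d t j, φ (commTree c w d t j) = commTree (φ ∘ c) (φ ∘ w) d t j
  | 0, t, j => by simp [commTree]
  | d + 1, t, j => by simp [commTree, map_commutatorElement, map_commTree φ c w d]

theorem commTree_eq_one {c : Fin 2 → G} {w : ℕ → G} {i : ℕ} (hi : w i = 1) :
    ∀ {d j : ℕ} (t : Fin 2), i / 2 ^ d = j → commTree c w d t j = 1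
  | 0, j, t, hj => by simp_all [commTree]
  | d + 1, j, t, hj => by
    have hchild : i / 2 ^ d = 2 * j ∨ i / 2 ^ d = 2 * j + 1 := by
      rw [pow_succ, ← Nat.div_div_eq_div_mul] at hj
      omega
    rcases hchild with hleft | hright
    · simp [commTree, commTree_eq_one hi 0 hleft]
    · simp [commTree, commTree_eq_one hi 1 hright]

end CommTree

theorem commute_pow_sub_of_pow_mul_pow_eq {G : Type*} [Group G] {g h : G} {i i' j j' : ℕ}
    (hi : i' ≤ i) (heq : g ^ i * h ^ j = g ^ i' * h ^ j') : Commute (g ^ (i - i')) h := by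
  have hgi : g ^ (i - i') = h ^ j' * (h ^ j)⁻¹ := by
    rw [pow_sub g hi, ← (Commute.pow_pow_self g i' i).inv_left.eq, inv_mul_eq_iff_eq_mul,
      ← mul_assoc, ← heq, mul_inv_cancel_right]
  rw [hgi]
  exact ((Commute.refl h).pow_left j').mul_left ((Commute.refl h).pow_left j).inv_left

theorem commutatorElement_pow_sub_eq_one_of_pow_eq {G : Type*} [Group G] (g : G) {h : G}
    {j j' : ℕ} (hj : j' ≤ j) (heq : h ^ j = h ^ j') : ⁅g, h ^ (j - j')⁆ = 1 := by
  rw [pow_sub h hj, heq, mul_inv_cancel, commutatorElement_one_right]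

theorem exists_commutatorElement_pow_eq_one {G : Type*} [Group G] [Finite G] (g h : G) {k : ℕ}
    (hG : Nat.card G < (k + 1) ^ 2) :
    ∃ a, 0 < a ∧ a ≤ k ∧ (⁅g ^ a, h⁆ = 1 ∨ ⁅g, h ^ a⁆ = 1) := by
  let f (p : Fin (k + 1) × Fin (k + 1)) : G := g ^ (p.1 : ℕ) * h ^ (p.2 : ℕ)
  have hf : ¬ Function.Injective f := fun hf =>
    hG.not_ge (by simpa [sq] using Nat.card_le_card_of_injective f hf)
  obtain ⟨⟨i, j⟩, ⟨i', j'⟩, heq, hne⟩ := Function.not_injective_iff.mp hf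
  simp only [f] at heq
  have := i.is_lt; have := i'.is_lt; have := j.is_lt; have := j'.is_lt
  rcases lt_trichotomy (i : ℕ) i' with hlt | hii | hlt
  · exact ⟨i' - i, by omega, by omega, .inl (commutatorElement_eq_one_iff_commute.mpr
      (commute_pow_sub_of_pow_mul_pow_eq hlt.le heq.symm))⟩
  · have hhj : h ^ (j : ℕ) = h ^ (j' : ℕ) := by rw [hii] at heq; exact mul_left_cancel heq
    have hjj : (j : ℕ) ≠ j' := fun hjj => hne (Prod.ext (Fin.ext hii) (Fin.ext hjj))
    rcases hjj.lt_or_gt with hlt | hlt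
    · exact ⟨j' - j, by omega, by omega,
        .inr (commutatorElement_pow_sub_eq_one_of_pow_eq g hlt.le hhj.symm)⟩
    · exact ⟨j - j', by omega, by omega,
        .inr (commutatorElement_pow_sub_eq_one_of_pow_eq g hlt.le hhj)⟩
  · exact ⟨i - i', by omega, by omega, .inl (commutatorElement_eq_one_iff_commute.mpr
      (commute_pow_sub_of_pow_mul_pow_eq hlt.le heq))⟩

namespace FreeGroup

theorem hasEndLetters_commTree {w : ℕ → FreeGroup (Fin 2)}
    (hw : ∀ i, HasEndLetters (0, true) (1, false) (w i)) :
    ∀ d t j, HasEndLetters (t, true) (t, false) (commTree of w d t j)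
  | 0, t, j => (hw j).conj t
  | d + 1, t, j =>
    ((hasEndLetters_commTree hw d 0 (2 * j)).commutatorElement
      (hasEndLetters_commTree hw d 1 (2 * j + 1)) (by decide)).conj t

theorem norm_commTree_add_one_le {w : ℕ → FreeGroup (Fin 2)} {m : ℕ} (hw : ∀ i, norm (w i) ≤ m) :
    ∀ d t j, norm (commTree of w d t j) + 1 ≤ 4 ^ d * (m + 3)
  | 0, t, j => by
    have := norm_conj_le t (w j)
    have := hw j
    simp only [commTree, pow_zero, one_mul]
    omega
  | d + 1, t, j => by
    have := norm_conj_le t ⁅commTree of w d 0 (2 * j), commTree of w d 1 (2 * j + 1)⁆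
    have := norm_commutatorElement_le (commTree of w d 0 (2 * j)) (commTree of w d 1 (2 * j + 1))
    have := norm_commTree_add_one_le hw d 0 (2 * j)
    have := norm_commTree_add_one_le hw d 1 (2 * j + 1)
    rw [pow_succ, mul_comm _ 4, mul_assoc]
    simp only [commTree]
    omega

-- The leaves `i ≥ 2k` repeat earlier words; `% k` only keeps their length bounded.
def commutatorWord (k i : ℕ) : FreeGroup (Fin 2) :=
  if i < k then ⁅of (0 : Fin 2) ^ (i % k + 1), of 1⁆ else ⁅of (0 : Fin 2), of 1 ^ (i % k + 1)⁆

theorem hasEndLetters_commutatorWord (k i : ℕ) :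
    HasEndLetters (0, true) (1, false) (commutatorWord k i) := by
  unfold commutatorWord
  split
  · exact (HasEndLetters.of_pow 0 (Nat.succ_ne_zero _)).commutatorElement (.of 1) (by decide)
  · exact (HasEndLetters.of 0).commutatorElement (.of_pow 1 (Nat.succ_ne_zero _)) (by decide)

theorem norm_commutatorWord_le {k : ℕ} (hk : 0 < k) (i : ℕ) :
    norm (commutatorWord k i) ≤ 2 * k + 2 := by
  have := Nat.mod_lt i hk
  unfold commutatorWord
  split
  · have := norm_commutatorElement_le (of (0 : Fin 2) ^ (i % k + 1)) (of 1)
    simp only [norm_of_pow, norm_of] at this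
    omega
  · have := norm_commutatorElement_le (of (0 : Fin 2)) (of 1 ^ (i % k + 1))
    simp only [norm_of_pow, norm_of] at this
    omega

theorem exists_map_commutatorWord_eq_one {G : Type*} [Group G] [Finite G]
    (φ : FreeGroup (Fin 2) →* G) {k : ℕ} (hG : Nat.card G < (k + 1) ^ 2) :
    ∃ i < 2 * k, φ (commutatorWord k i) = 1 := by
  obtain ⟨a, ha, hak, hφ | hφ⟩ := exists_commutatorElement_pow_eq_one (φ (of 0)) (φ (of 1)) hG
  · refine ⟨a - 1, by omega, ?_⟩
    rw [commutatorWord, if_pos (by omega), Nat.mod_eq_of_lt (by omega), Nat.sub_add_cancel ha]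
    simpa [map_commutatorElement] using hφ
  · refine ⟨k + (a - 1), by omega, ?_⟩
    rw [commutatorWord, if_neg (by omega), Nat.add_mod_left, Nat.mod_eq_of_lt (by omega),
      Nat.sub_add_cancel ha]
    simpa [map_commutatorElement] using hφ

end FreeGroup

open FreeGroup

theorem exists_le_two_pow_lt_two_mul {m : ℕ} (hm : 0 < m) : ∃ d, m ≤ 2 ^ d ∧ 2 ^ d < 2 * m := by
  refine ⟨Nat.log 2 (2 * m - 1), ?_, ?_⟩
  · have := Nat.lt_pow_succ_log_self one_lt_two (2 * m - 1)
    rw [pow_succ] at this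
    omega
  · have := Nat.pow_log_le_self 2 (x := 2 * m - 1) (by omega)
    omega

theorem four_pow_mul_le {n k d : ℕ} (hk : 0 < k) (hkn : 3 * k ≤ n) (hd : 2 ^ d < 4 * k) :
    4 ^ d * (2 * k + 5) ≤ 4 * n ^ 2 * (n + 1) :=
  calc 4 ^ d * (2 * k + 5) ≤ (4 * k) ^ 2 * (2 * k + 5) := by
        rw [show 4 ^ d = (2 ^ d) ^ 2 by rw [← pow_mul, mul_comm, pow_mul]; norm_num]
        gcongr
    _ ≤ 4 * (3 * k) ^ 2 * (3 * k + 1) := by nlinarith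
    _ ≤ 4 * n ^ 2 * (n + 1) := by gcongr

/-- For every positive integer `n` there is a nontrivial word `v` in the free group on two
generators of word length at most `4n²(n+1)` which is a law in every finite group of
order at most `n²/9`. -/
theorem stmt_3 (n : ℕ) (hn : 0 < n) :
    ∃ v : FreeGroup (Fin 2), v ≠ 1 ∧
      (FreeGroup.toWord v).length ≤ 4 * n ^ 2 * (n + 1) ∧
      ∀ (Γ : Type) (_ : Group Γ) (_ : Finite Γ),
        (Nat.card Γ : ℝ) ≤ (n : ℝ) ^ 2 / 9 →
        ∀ φ : FreeGroup (Fin 2) →* Γ, φ v = 1 := by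
  rcases lt_or_ge n 3 with hn3 | hn3
  · refine ⟨of 0, of_ne_one 0, ?_, fun Γ _ _ hΓ _ => absurd hΓ ?_⟩
    · simp only [toWord_of, List.length_singleton]
      exact (by positivity : 0 < 4 * n ^ 2 * (n + 1))
    have : (n : ℝ) ≤ 2 := by exact_mod_cast (by omega : n ≤ 2)
    have : (1 : ℝ) ≤ Nat.card Γ := by exact_mod_cast Nat.card_pos
    nlinarith
  set k := n / 3
  obtain ⟨d, hkd, hdk⟩ := exists_le_two_pow_lt_two_mul (m := 2 * k) (by omega)
  refine ⟨commTree of (commutatorWord k) d 0 0,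
    (hasEndLetters_commTree (hasEndLetters_commutatorWord k) d 0 0).ne_one, ?_, ?_⟩
  · have := (norm_commTree_add_one_le (norm_commutatorWord_le (k := k) (by omega)) d 0 0).trans
      (four_pow_mul_le (by omega) (Nat.mul_div_le n 3) (by omega))
    exact (Nat.le_succ _).trans this
  · intro Γ _ _ hΓ φ
    have hcard : Nat.card Γ < (k + 1) ^ 2 := by
      have : (n : ℝ) < 3 * (k + 1) := by exact_mod_cast (by omega : n < 3 * (k + 1))
      have : (Nat.card Γ : ℝ) < (k + 1) ^ 2 := by nlinarith
      exact_mod_cast this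
    obtain ⟨i, hi, hφ⟩ := exists_map_commutatorWord_eq_one φ hcard
    rw [map_commTree]
    exact commTree_eq_one (by simpa using hφ) 0 (Nat.div_eq_of_lt (by omega))
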